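/- arXiv:1112.0846 — 7 statements merged into one kernel-verified Lean document; each statement's English description precedes it below -/
import Mathlib

section
/- For every finite simple graph G on n ≥ 3 vertices, d_oc(G, n−2) equals the number of edges uv of G such that both endpoints u and v have degree at least 2 in G. -/
/-- `S` is a dominating set of `G`: every vertex not in `S` is adjacent to a vertex of `S`. -/
def IsDomSet {V : Type*} (G : SimpleGraph V) (S : Finset V) : Prop :=
  ∀ v ∉ S, ∃ u ∈ S, G.Adj u v

/-- `S` is an outer-connected dominating set of `G`. -/
def IsOcdSet {V : Type*} [Fintype V] (G : SimpleGraph V) (S : Finset V) : Prop :=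
  IsDomSet G S ∧ (S = Finset.univ ∨ (G.induce ((↑S : Set V)ᶜ)).Connected)

/-- `docNum G i` is the number of ocd-sets of `G` of cardinality `i`. -/
noncomputable def docNum {V : Type*} [Fintype V] (G : SimpleGraph V) (i : ℕ) : ℕ :=
  Nat.card {S : Finset V // IsOcdSet G S ∧ S.card = i}

/-! An ocd-set of size `n - 2` is the complement of a pair `{u, v}`. The induced graph on `{u, v}`
is connected exactly when `uv` is an edge, and then `{u, v}ᶜ` dominates `u` (resp. `v`) exactly
when `u` (resp. `v`) has a neighbour other than `v` (resp. `u`), i.e. has degree at least `2`. -/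

namespace SimpleGraph

variable {V : Type*} (G : SimpleGraph V) {u v : V}

theorem induce_pair_connected_iff (huv : u ≠ v) :
    (G.induce ({u, v} : Set V)).Connected ↔ G.Adj u v := by
  refine ⟨fun h ↦ ?_, G.induce_pair_connected_of_adj⟩
  have : Nontrivial ({u, v} : Set V) := Set.nontrivial_coe_sort.2 (Set.nontrivial_pair huv)
  obtain ⟨⟨w, hw⟩, hadj⟩ := h.preconnected.exists_adj_of_nontrivial ⟨u, by simp⟩
  rcases hw with rfl | rfl
  · exact absurd hadj (SimpleGraph.irrefl _)
  · exact hadj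

theorem two_le_ncard_neighborSet_iff [Finite V] (h : G.Adj u v) :
    2 ≤ (G.neighborSet u).ncard ↔ ∃ w, G.Adj u w ∧ w ≠ v := by
  change 1 < _ ↔ _
  rw [Set.one_lt_ncard_iff_nontrivial]
  exact ⟨fun hu ↦ hu.exists_ne v, fun ⟨w, hw, hwv⟩ ↦ Set.nontrivial_of_mem_mem_ne hw h hwv⟩

end SimpleGraph

theorem Sym2.toFinset_injective {α : Type*} [DecidableEq α] :
    Function.Injective (Sym2.toFinset : Sym2 α → Finset α) := fun _ _ h ↦
  Sym2.ext fun x ↦ by rw [← Sym2.mem_toFinset, h, Sym2.mem_toFinset]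

open Finset

section

variable {V : Type*} [Fintype V] [DecidableEq V] (G : SimpleGraph V) {u v : V}

theorem isDomSet_compl_pair_iff (h : G.Adj u v) :
    IsDomSet G {u, v}ᶜ ↔ 2 ≤ (G.neighborSet u).ncard ∧ 2 ≤ (G.neighborSet v).ncard := by
  rw [G.two_le_ncard_neighborSet_iff h, G.two_le_ncard_neighborSet_iff h.symm]
  simp only [IsDomSet, mem_compl, not_not]
  simp only [mem_insert, mem_singleton, forall_eq_or_imp, forall_eq, not_or]
  exact and_congr
    ⟨fun ⟨w, ⟨_, hwv⟩, hw⟩ ↦ ⟨w, hw.symm, hwv⟩, fun ⟨w, hw, hwv⟩ ↦ ⟨w, ⟨hw.ne', hwv⟩, hw.symm⟩⟩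
    ⟨fun ⟨w, ⟨hwu, _⟩, hw⟩ ↦ ⟨w, hw.symm, hwu⟩, fun ⟨w, hw, hwu⟩ ↦ ⟨w, ⟨hwu, hw.ne'⟩, hw.symm⟩⟩

theorem isOcdSet_compl_pair_iff (huv : u ≠ v) :
    IsOcdSet G {u, v}ᶜ ↔
      G.Adj u v ∧ 2 ≤ (G.neighborSet u).ncard ∧ 2 ≤ (G.neighborSet v).ncard := by
  have hne : ({u, v}ᶜ : Finset V) ≠ univ :=
    (compl_ne_univ_iff_nonempty _).2 (insert_nonempty _ _)
  have hcompl : (↑({u, v}ᶜ : Finset V) : Set V)ᶜ = {u, v} := by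
    rw [coe_compl, compl_compl, coe_pair]
  rw [IsOcdSet, hcompl, G.induce_pair_connected_iff huv, or_iff_right hne]
  exact ⟨fun ⟨hdom, hadj⟩ ↦ ⟨hadj, (isDomSet_compl_pair_iff G hadj).1 hdom⟩,
    fun ⟨hadj, hdeg⟩ ↦ ⟨(isDomSet_compl_pair_iff G hadj).2 hdeg, hadj⟩⟩

end

/-- for `n ≥ 3`, `d_oc(G, n-2)` equals the number of edges of `G`
both of whose endpoints have degree at least `2`. -/
theorem stmt_3 {V : Type*} [Fintype V] (G : SimpleGraph V) (hn : 3 ≤ Fintype.card V) :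
    docNum G (Fintype.card V - 2) =
      Nat.card {e : Sym2 V // e ∈ G.edgeSet ∧ ∀ v ∈ e, 2 ≤ (G.neighborSet v).ncard} := by
  classical
  have hocd : ∀ e : {e : Sym2 V // e ∈ G.edgeSet ∧ ∀ v ∈ e, 2 ≤ (G.neighborSet v).ncard},
      IsOcdSet G e.1.toFinsetᶜ ∧ #e.1.toFinsetᶜ = Fintype.card V - 2 := by
    rintro ⟨e, he, hdeg⟩
    induction e using Sym2.ind with | h u v => ?_
    rw [Sym2.toFinset_mk_eq, isOcdSet_compl_pair_iff G he.ne, card_compl, card_pair he.ne]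
    exact ⟨⟨he, hdeg u (by simp), hdeg v (by simp)⟩, rfl⟩
  refine (Nat.card_congr (Equiv.ofBijective (fun e ↦ ⟨_, hocd e⟩) ⟨?_, ?_⟩)).symm
  · rintro ⟨e₁, _⟩ ⟨e₂, _⟩ h
    exact Subtype.ext (Sym2.toFinset_injective (compl_injective (congrArg Subtype.val h)))
  · rintro ⟨S, hS, hcard⟩
    obtain ⟨u, v, huv, hSc⟩ : ∃ u v, u ≠ v ∧ Sᶜ = {u, v} :=
      card_eq_two.1 (by rw [card_compl, hcard]; omega)
    rw [← compl_compl S, hSc, isOcdSet_compl_pair_iff G huv] at hS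
    refine ⟨⟨s(u, v), hS.1, by simpa using hS.2⟩, Subtype.ext ?_⟩
    simp [Sym2.toFinset_mk_eq, ← hSc]
end

section
/- For the star K_{1,n} with n ≥ 1 (one center adjacent to n leaves, and no other edges), the ocd-sets are exactly the whole vertex set, the sets obtained from the whole vertex set by removing one leaf, and the set of all n leaves; consequently d_oc(K_{1,n}, n) = n+1, d_oc(K_{1,n}, n+1) = 1, and d_oc(K_{1,n}, i) = 0 for all other i. -/
/-- The star `K_{1,n}`: vertex `0` is the center, adjacent to the `n` leaves. -/
def starGraph (n : ℕ) : SimpleGraph (Fin (n + 1)) :=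
  SimpleGraph.fromRel (fun u _ => u = 0)

/-!
An ocd-set of `K_{1,n}` misses at most one vertex: if it contains the centre, the leaves it misses
span no edges, so outer-connectedness allows only one of them; if it misses the centre, domination
forces it to contain every leaf. Conversely, when `n ≥ 1` no vertex is isolated, and in such a graph
every set missing at most one vertex is an ocd-set. Hence the ocd-sets are exactly the sets of size
at least `n`, and `d_oc(K_{1,n}, i)` is `(n+1).choose i` for `i ≥ n` and `0` otherwise.
-/

open Finset

theorem Finset.card_compl_le_one_iff {α : Type*} [Fintype α] [DecidableEq α] {s : Finset α} :
    #sᶜ ≤ 1 ↔ s = univ ∨ ∃ v, s = univ \ {v} := by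
  rw [Nat.le_one_iff_eq_zero_or_eq_one, card_eq_zero, card_eq_one, compl_eq_empty_iff]
  simp only [← compl_eq_univ_sdiff, eq_compl_comm (x := s), eq_comm]

theorem isOcdSet_of_card_compl_le_one {V : Type*} [Fintype V] [DecidableEq V]
    {G : SimpleGraph V} {S : Finset V} (hG : ∀ v, ∃ u, G.Adj u v) (hS : #Sᶜ ≤ 1) :
    IsOcdSet G S := by
  have hsub : Subsingleton ↥((↑S : Set V)ᶜ) := by
    rw [← coe_compl]; exact card_le_one_iff_subsingleton_coe.mp hS
  refine ⟨fun v hv => ?_, ?_⟩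
  · obtain ⟨u, hu⟩ := hG v
    refine ⟨u, by_contra fun hu' => hu.ne ?_, hu⟩
    exact congrArg Subtype.val (Subsingleton.elim (α := ↥((↑S : Set V)ᶜ)) ⟨u, hu'⟩ ⟨v, hv⟩)
  · refine or_iff_not_imp_left.mpr fun hSu => ?_
    have : Nonempty ↥((↑S : Set V)ᶜ) :=
      (Set.nonempty_compl.mpr (by rwa [Ne, coe_eq_univ])).to_subtype
    exact .of_subsingleton

section Star

variable {n : ℕ} {S : Finset (Fin (n + 1))}

theorem starGraph_adj {u v : Fin (n + 1)} :
    (starGraph n).Adj u v ↔ u ≠ v ∧ (u = 0 ∨ v = 0) := by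
  simp [starGraph]

theorem starGraph_exists_adj (hn : 1 ≤ n) (v : Fin (n + 1)) : ∃ u, (starGraph n).Adj u v := by
  by_cases hv : v = 0
  · refine ⟨Fin.last n, starGraph_adj.mpr ⟨?_, .inr hv⟩⟩
    rw [hv, Ne, Fin.ext_iff]
    simp only [Fin.val_last, Fin.val_zero]
    omega
  · exact ⟨0, starGraph_adj.mpr ⟨Ne.symm hv, .inl rfl⟩⟩

theorem starGraph_induce_eq_bot {T : Set (Fin (n + 1))} (h0 : 0 ∉ T) :
    (starGraph n).induce T = ⊥ := by
  ext u v
  simp only [SimpleGraph.comap_adj, Function.Embedding.coe_subtype, starGraph_adj,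
    SimpleGraph.bot_adj, iff_false, not_and]
  rintro - (hu | hv)
  · exact h0 (hu ▸ u.2)
  · exact h0 (hv ▸ v.2)

theorem IsDomSet.compl_subset_singleton_zero (hS : IsDomSet (starGraph n) S) (h0 : 0 ∉ S) :
    Sᶜ ⊆ {0} := by
  intro v hv
  obtain ⟨u, huS, hu⟩ := hS v (mem_compl.mp hv)
  rcases (starGraph_adj.mp hu).2 with rfl | rfl
  · exact absurd huS h0
  · exact mem_singleton_self 0

theorem IsOcdSet.card_compl_le_one_of_starGraph (hS : IsOcdSet (starGraph n) S) : #Sᶜ ≤ 1 := by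
  obtain ⟨hdom, rfl | hconn⟩ := hS
  · simp
  by_cases h0 : 0 ∈ S
  · rw [starGraph_induce_eq_bot (by simpa using h0), SimpleGraph.connected_bot_iff] at hconn
    rw [← coe_compl] at hconn
    exact card_le_one_iff_subsingleton_coe.mpr hconn.1
  · exact (card_le_card (hdom.compl_subset_singleton_zero h0)).trans (card_singleton _).le

theorem isOcdSet_starGraph_iff (hn : 1 ≤ n) : IsOcdSet (starGraph n) S ↔ #Sᶜ ≤ 1 :=
  ⟨IsOcdSet.card_compl_le_one_of_starGraph, isOcdSet_of_card_compl_le_one (starGraph_exists_adj hn)⟩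

theorem docNum_starGraph (hn : 1 ≤ n) (i : ℕ) :
    docNum (starGraph n) i = if n ≤ i then (n + 1).choose i else 0 := by
  have hocd (S : Finset (Fin (n + 1))) : IsOcdSet (starGraph n) S ↔ n ≤ #S := by
    rw [isOcdSet_starGraph_iff hn, card_compl, Fintype.card_fin]
    omega
  simp only [docNum, hocd]
  split_ifs with hi
  · have hcard (S : Finset (Fin (n + 1))) : n ≤ #S ∧ #S = i ↔ #S = i :=
      ⟨And.right, fun h => ⟨h ▸ hi, h⟩⟩
    simp only [hcard, Nat.card_eq_fintype_card, Fintype.card_finset_len, Fintype.card_fin]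
  · have : IsEmpty {S : Finset (Fin (n + 1)) // n ≤ #S ∧ #S = i} :=
      ⟨fun ⟨S, hle, heq⟩ => hi (heq ▸ hle)⟩
    exact Nat.card_of_isEmpty

end Star

/-- the ocd-sets of `K_{1,n}` are the whole vertex set, the sets obtained by
removing one leaf, and the set of all leaves; hence `d_oc(K_{1,n}, n) = n + 1`,
`d_oc(K_{1,n}, n+1) = 1`, and `d_oc(K_{1,n}, i) = 0` otherwise. -/
theorem stmt_5 (n : ℕ) (hn : 1 ≤ n) :
    (∀ S : Finset (Fin (n + 1)), IsOcdSet (starGraph n) S ↔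
      (S = Finset.univ ∨ (∃ v : Fin (n + 1), v ≠ 0 ∧ S = Finset.univ \ {v}) ∨
        S = Finset.univ \ {0})) ∧
    docNum (starGraph n) n = n + 1 ∧
    docNum (starGraph n) (n + 1) = 1 ∧
    (∀ i : ℕ, i ≠ n → i ≠ n + 1 → docNum (starGraph n) i = 0) := by
  refine ⟨fun S => ?_, ?_, ?_, fun i hi hi' => ?_⟩
  · rw [isOcdSet_starGraph_iff hn, card_compl_le_one_iff]
    refine or_congr_right ⟨fun ⟨v, hS⟩ => ?_, ?_⟩
    · by_cases hv : v = 0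
      · exact .inr (hv ▸ hS)
      · exact .inl ⟨v, hv, hS⟩
    · rintro (⟨v, -, hS⟩ | hS)
      exacts [⟨v, hS⟩, ⟨0, hS⟩]
  · rw [docNum_starGraph hn, if_pos le_rfl, Nat.choose_succ_self_right]
  · rw [docNum_starGraph hn, if_pos (Nat.le_succ n), Nat.choose_self]
  · rw [docNum_starGraph hn]
    split_ifs
    exacts [Nat.choose_eq_zero_of_lt (by omega), rfl]
end

section
/- For the path P_n on n ≥ 3 vertices, d_oc(P_n, n) = 1, d_oc(P_n, n−1) = n, d_oc(P_n, n−2) = n−3, and d_oc(P_n, i) = 0 for every i < n−2. -/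
/-!
The complement of an ocd-set `S ≠ V` of `P_n` induces a connected subgraph, so it is a block of
consecutive vertices. It has at most two vertices, since the middle one of three consecutive
vertices outside `S` would have no neighbour in `S`; hence `|S| ≥ n - 2`. Every set missing a
single vertex is an ocd-set, and a set missing two consecutive vertices `a, a + 1` is one exactly
when both have a neighbour in it, i.e. when `1 ≤ a ≤ n - 3`.
-/

open SimpleGraph Finset

section General

variable {V : Type*} [Fintype V] (G : SimpleGraph V)

lemma isOcdSet_univ : IsOcdSet G univ :=
  ⟨fun v hv => absurd (mem_univ v) hv, Or.inl rfl⟩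

open Classical in
lemma docNum_eq_card_filter (i : ℕ) : docNum G i = #{S : Finset V | IsOcdSet G S ∧ #S = i} := by
  rw [docNum, Nat.card_eq_fintype_card, Fintype.card_subtype]

lemma docNum_card : docNum G (Fintype.card V) = 1 := by
  rw [docNum_eq_card_filter, card_eq_one]
  refine ⟨univ, ext fun S => ?_⟩
  simp only [mem_filter, mem_univ, true_and, mem_singleton, card_eq_iff_eq_univ]
  exact ⟨And.right, fun h => ⟨h ▸ isOcdSet_univ G, h⟩⟩

end General

variable {n : ℕ}

lemma pathGraph_exists_adj (hn : 2 ≤ n) (v : Fin n) : ∃ u, (pathGraph n).Adj u v := by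
  by_cases h : v.val + 1 < n
  · exact ⟨⟨v + 1, h⟩, pathGraph_adj.2 (Or.inr rfl)⟩
  · exact ⟨⟨v - 1, by omega⟩, pathGraph_adj.2 (Or.inl (by simp only; omega))⟩

lemma pathGraph_walk_mem_support_of_mem_uIcc {u v k : Fin n} (p : (pathGraph n).Walk u v)
    (hk : k ∈ Set.uIcc u v) : k ∈ p.support := by
  induction p with
  | nil => simp_all
  | @cons a b c hab p ih =>
    rw [Walk.support_cons, List.mem_cons]
    refine (eq_or_ne k a).imp id fun hka => ih ?_
    rw [pathGraph_adj] at hab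
    rw [Set.mem_uIcc] at hk ⊢
    omega

lemma ordConnected_of_connected_induce_pathGraph {s : Set (Fin n)}
    (h : ((pathGraph n).induce s).Connected) : s.OrdConnected := by
  refine ⟨fun x hx y hy k hk => ?_⟩
  obtain ⟨p⟩ := h.preconnected ⟨x, hx⟩ ⟨y, hy⟩
  have hkp := pathGraph_walk_mem_support_of_mem_uIcc (p.map (Embedding.induce s).toHom)
    (Set.Icc_subset_uIcc hk)
  rw [Walk.support_map, List.mem_map] at hkp
  obtain ⟨k', -, rfl⟩ := hkp
  exact k'.2

namespace IsOcdSet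

variable {S : Finset (Fin n)}

lemma val_le_succ_of_notMem_pathGraph (hS : IsOcdSet (pathGraph n) S) {x y : Fin n}
    (hx : x ∉ S) (hy : y ∉ S) : y.val ≤ x.val + 1 := by
  by_contra! hxy
  obtain ⟨hdom, huniv | hconn⟩ := hS
  · exact hx (huniv ▸ mem_univ x)
  have hout : ∀ k : Fin n, x ≤ k → k ≤ y → k ∉ S := fun k hxk hky =>
    (ordConnected_of_connected_induce_pathGraph hconn).out (x := x) hx (y := y) hy ⟨hxk, hky⟩
  let k : Fin n := ⟨x + 1, by omega⟩
  have hk : k.val = x.val + 1 := rfl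
  obtain ⟨u, huS, hu⟩ := hdom k (hout k (by omega) (by omega))
  rw [pathGraph_adj] at hu
  exact hout u (by omega) (by omega) huS

lemma sub_two_le_card_pathGraph (hS : IsOcdSet (pathGraph n) S) : n - 2 ≤ #S := by
  rcases Sᶜ.eq_empty_or_nonempty with h | hne
  · rw [compl_eq_empty_iff] at h
    simp [h]
  have hwidth := hS.val_le_succ_of_notMem_pathGraph (mem_compl.1 (Sᶜ.min'_mem hne))
    (mem_compl.1 (Sᶜ.max'_mem hne))
  have hcompl : #Sᶜ ≤ 2 := calc
    #Sᶜ ≤ #(Icc (Sᶜ.min' hne) (Sᶜ.max' hne)) :=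
      card_le_card fun x hx => mem_Icc.2 ⟨min'_le _ _ hx, le_max' _ _ hx⟩
    _ ≤ 2 := by rw [Fin.card_Icc]; omega
  rw [card_compl, Fintype.card_fin] at hcompl
  omega

end IsOcdSet

lemma isOcdSet_pathGraph_compl_singleton (hn : 2 ≤ n) (a : Fin n) :
    IsOcdSet (pathGraph n) {a}ᶜ := by
  refine ⟨fun v hv => ?_, Or.inr ?_⟩
  · rw [mem_compl, mem_singleton, not_not] at hv
    obtain ⟨u, hu⟩ := pathGraph_exists_adj hn v
    exact ⟨u, by simpa [hv] using hu.ne, hu⟩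
  · rw [coe_compl, compl_compl, coe_singleton, induce_singleton_eq_top]
    exact connected_top

lemma docNum_pathGraph_sub_one (hn : 2 ≤ n) : docNum (pathGraph n) (n - 1) = n := by
  rw [docNum_eq_card_filter]
  calc _ = #(powersetCard (n - 1) (univ : Finset (Fin n))) := congrArg card (ext fun S => ?_)
    _ = n := by
      rw [card_powersetCard, card_univ, Fintype.card_fin, Nat.choose_symm (by omega),
        Nat.choose_one_right]
  simp only [mem_filter, mem_univ, true_and, mem_powersetCard, subset_univ, and_iff_right_iff_imp]
  intro hS
  obtain ⟨a, ha⟩ := card_eq_one.1 (by rw [card_compl, Fintype.card_fin]; omega : #Sᶜ = 1)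
  rw [← compl_compl S, ha]
  exact isOcdSet_pathGraph_compl_singleton hn a

/-- The vertices of `P_n` other than `j + 1` and `j + 2`; the shift makes the admissible
indices exactly `j ∈ range (n - 3)`. -/
def complPair (n j : ℕ) : Finset (Fin n) :=
  {x | x.val ≠ j + 1 ∧ x.val ≠ j + 2}

@[simp]
lemma mem_complPair {j : ℕ} {x : Fin n} : x ∈ complPair n j ↔ x.val ≠ j + 1 ∧ x.val ≠ j + 2 := by
  simp [complPair]

lemma compl_complPair {j : ℕ} (hj : j + 2 < n) :
    (complPair n j)ᶜ = {⟨j + 1, by omega⟩, ⟨j + 2, hj⟩} := by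
  ext x
  simp [Fin.ext_iff, or_iff_not_imp_left]

lemma card_complPair {j : ℕ} (hj : j + 2 < n) : #(complPair n j) = n - 2 := by
  have hcard := card_compl (complPair n j)
  rw [compl_complPair hj, card_pair (by simp [Fin.ext_iff]), Fintype.card_fin] at hcard
  omega

lemma isOcdSet_complPair {j : ℕ} (hj : j + 3 < n) : IsOcdSet (pathGraph n) (complPair n j) := by
  refine ⟨fun v hv => ?_, Or.inr ?_⟩
  · rw [mem_complPair] at hv
    by_cases hv1 : v.val = j + 1
    · exact ⟨⟨j, by omega⟩, by simp, pathGraph_adj.2 (Or.inl hv1.symm)⟩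
    · exact ⟨⟨j + 3, hj⟩, by simp, pathGraph_adj.2 (Or.inr (by simp only; omega))⟩
  · rw [← coe_compl, compl_complPair (by omega), coe_pair]
    exact induce_pair_connected_of_adj (pathGraph_adj.2 (Or.inl rfl))

lemma complPair_injOn : Set.InjOn (complPair n) {j | j + 1 < n} := by
  intro j hj j' hj' h
  have h1 := congrArg ((⟨j + 1, hj⟩ : Fin n) ∈ ·) h
  have h2 := congrArg ((⟨j' + 1, hj'⟩ : Fin n) ∈ ·) h
  simp only [mem_complPair, eq_iff_iff] at h1 h2
  omega

lemma IsOcdSet.exists_eq_complPair {S : Finset (Fin n)} (hS : IsOcdSet (pathGraph n) S)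
    (hn : 2 ≤ n) (hcard : #S = n - 2) : ∃ j, j + 3 < n ∧ S = complPair n j := by
  obtain ⟨x, y, hxy, hSc⟩ := card_eq_two.1 (by rw [card_compl, Fintype.card_fin]; omega : #Sᶜ = 2)
  wlog hlt : x < y generalizing x y
  · exact this y x hxy.symm (by rw [hSc, pair_comm]) (by omega)
  have hnotMem : ∀ v, v ∉ S ↔ v = x ∨ v = y := fun v => by
    rw [← mem_compl, hSc, mem_insert, mem_singleton]
  have hx : x ∉ S := (hnotMem x).2 (Or.inl rfl)
  have hy : y ∉ S := (hnotMem y).2 (Or.inr rfl)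
  have hyx := hS.val_le_succ_of_notMem_pathGraph hx hy
  obtain ⟨u, huS, hu⟩ := hS.1 x hx
  obtain ⟨w, hwS, hw⟩ := hS.1 y hy
  have hu' : ¬(u = x ∨ u = y) := fun h => (hnotMem u).2 h huS
  have hw' : ¬(w = x ∨ w = y) := fun h => (hnotMem w).2 h hwS
  -- the neighbours `u` of `x` and `w` of `y` in `S` force `1 ≤ x` and `y + 1 < n`
  rw [pathGraph_adj] at hu hw
  refine ⟨x.val - 1, by omega, ext fun v => ?_⟩
  rw [mem_complPair, ← not_iff_not, hnotMem]
  omega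

lemma docNum_pathGraph_sub_two (hn : 2 ≤ n) : docNum (pathGraph n) (n - 2) = n - 3 := by
  rw [docNum_eq_card_filter]
  calc _ = #((range (n - 3)).image (complPair n)) := congrArg card (ext fun S => ?_)
    _ = n - 3 := by
      rw [card_image_of_injOn (complPair_injOn.mono fun j hj => by simp at hj ⊢; omega),
        card_range]
  simp only [mem_filter, mem_univ, true_and, mem_image, mem_range]
  constructor
  · rintro ⟨hS, hcard⟩
    obtain ⟨j, hj, rfl⟩ := hS.exists_eq_complPair hn hcard
    exact ⟨j, by omega, rfl⟩
  · rintro ⟨j, hj, rfl⟩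
    exact ⟨isOcdSet_complPair (by omega), card_complPair (by omega)⟩

lemma docNum_pathGraph_eq_zero_of_lt {i : ℕ} (hi : i < n - 2) : docNum (pathGraph n) i = 0 := by
  rw [docNum, Nat.card_eq_zero]
  refine Or.inl ⟨fun ⟨S, hS, hcard⟩ => ?_⟩
  have := hS.sub_two_le_card_pathGraph
  omega

/-- for the path `P_n` with `n ≥ 3`: `d_oc(P_n, n) = 1`,
`d_oc(P_n, n-1) = n`, `d_oc(P_n, n-2) = n - 3`, and `d_oc(P_n, i) = 0` for `i < n - 2`. -/
theorem stmt_6 (n : ℕ) (hn : 3 ≤ n) :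
    docNum (SimpleGraph.pathGraph n) n = 1 ∧
    docNum (SimpleGraph.pathGraph n) (n - 1) = n ∧
    docNum (SimpleGraph.pathGraph n) (n - 2) = n - 3 ∧
    (∀ i : ℕ, i < n - 2 → docNum (SimpleGraph.pathGraph n) i = 0) :=
  ⟨by simpa using docNum_card (pathGraph n), docNum_pathGraph_sub_one (by omega),
    docNum_pathGraph_sub_two (by omega), fun _ => docNum_pathGraph_eq_zero_of_lt⟩
end

section
/- The outer-connected domination number of the path P_n on n ≥ 4 vertices equals n−2, i.e., the minimum cardinality of an outer-connected dominating set of P_n is n−2. -/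
/-- The outer-connected domination number: the minimum cardinality of an ocd-set. -/
noncomputable def ocdNumber {V : Type*} [Fintype V] (G : SimpleGraph V) : ℕ :=
  sInf {k : ℕ | ∃ S : Finset V, IsOcdSet G S ∧ S.card = k}

open SimpleGraph Finset

theorem Finset.exists_lt_lt_of_two_lt_card {α : Type*} [LinearOrder α] {s : Finset α}
    (hs : 2 < s.card) : ∃ a ∈ s, ∃ b ∈ s, ∃ c ∈ s, a < b ∧ b < c := by
  have hne : s.Nonempty := card_pos.1 (by omega)
  obtain ⟨b, hb⟩ : ((s.erase (s.min' hne)).erase (s.max' hne)).Nonempty := by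
    rw [← card_pos, card_erase_eq_ite, card_erase_of_mem (s.min'_mem hne)]
    split_ifs <;> omega
  simp only [mem_erase] at hb
  obtain ⟨hb_max, hb_min, hb⟩ := hb
  exact ⟨_, s.min'_mem hne, b, hb, _, s.max'_mem hne,
    lt_of_le_of_ne (s.min'_le b hb) (Ne.symm hb_min), lt_of_le_of_ne (s.le_max' b hb) hb_max⟩

theorem SimpleGraph.Adj.isOcdSet_compl_pair {V : Type*} [Fintype V] [DecidableEq V]
    {G : SimpleGraph V} {u v u' v' : V} (huv : G.Adj u v) (hu' : G.Adj u' u) (hv' : G.Adj v' v)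
    (hu'v : u' ≠ v) (hv'u : v' ≠ u) : IsOcdSet G {u, v}ᶜ := by
  refine ⟨?_, Or.inr ?_⟩
  · intro w hw
    rw [notMem_compl, mem_insert, mem_singleton] at hw
    rcases hw with rfl | rfl
    · exact ⟨u', by simp [hu'v, hu'.ne], hu'⟩
    · exact ⟨v', by simp [hv'u, hv'.ne], hv'⟩
  · rw [coe_compl, compl_compl, coe_pair]
    exact induce_pair_connected_of_adj huv

section PathGraph

variable {n : ℕ}

theorem pathGraph_mem_support_of_le {x y : Fin n} (W : (pathGraph n).Walk x y) {z : Fin n}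
    (hxz : x ≤ z) (hzy : z ≤ y) : z ∈ W.support := by
  induction W with
  | nil => simp [le_antisymm hzy hxz]
  | @cons u v y huv W ih =>
    rcases eq_or_lt_of_le hxz with rfl | hlt
    · simp
    · rw [pathGraph_adj] at huv
      exact List.mem_cons_of_mem _ (ih (Fin.le_def.2 (by rw [Fin.lt_def] at hlt; omega)) hzy)

theorem ordConnected_of_preconnected_induce_pathGraph {T : Set (Fin n)}
    (hT : ((pathGraph n).induce T).Preconnected) : T.OrdConnected := by
  refine ⟨fun x hx y hy z hz => ?_⟩
  obtain ⟨W⟩ := hT ⟨x, hx⟩ ⟨y, hy⟩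
  obtain ⟨w, -, rfl⟩ := List.mem_map.1 <| (Walk.support_map _ W) ▸
    pathGraph_mem_support_of_le (W.map (Embedding.induce T).toHom) hz.1 hz.2
  exact w.2

theorem IsDomSet.card_compl_le_two_of_ordConnected {S : Finset (Fin n)}
    (hS : IsDomSet (pathGraph n) S) (hT : (↑S : Set (Fin n))ᶜ.OrdConnected) :
    Sᶜ.card ≤ 2 := by
  by_contra! h
  obtain ⟨a, ha, m, hm, b, hb, ham, hmb⟩ := exists_lt_lt_of_two_lt_card h
  obtain ⟨u, huS, hum⟩ := hS m (mem_compl.1 hm)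
  have hu : u ∈ Set.Icc a b := by
    rw [pathGraph_adj] at hum
    rw [Fin.lt_def] at ham hmb
    simp only [Set.mem_Icc, Fin.le_def]
    omega
  exact hT.out (by simpa using ha) (by simpa using hb) hu huS

theorem IsOcdSet.sub_two_le_card_of_pathGraph {S : Finset (Fin n)}
    (hS : IsOcdSet (pathGraph n) S) : n - 2 ≤ S.card := by
  obtain ⟨hdom, rfl | hconn⟩ := hS
  · simp
  · have := hdom.card_compl_le_two_of_ordConnected
      (ordConnected_of_preconnected_induce_pathGraph hconn.preconnected)
    rw [card_compl, Fintype.card_fin] at this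
    omega

end PathGraph

/-- the outer-connected domination number of `P_n` (`n ≥ 4`) is `n - 2`. -/
theorem stmt_8 (n : ℕ) (hn : 4 ≤ n) :
    ocdNumber (SimpleGraph.pathGraph n) = n - 2 := by
  let u : Fin n := ⟨1, by omega⟩
  let v : Fin n := ⟨2, by omega⟩
  have hS : IsOcdSet (pathGraph n) {u, v}ᶜ :=
    Adj.isOcdSet_compl_pair (u' := ⟨0, by omega⟩) (v' := ⟨3, by omega⟩)
      (by simp [pathGraph_adj, u, v]) (by simp [pathGraph_adj, u])
      (by simp [pathGraph_adj, v]) (by simp [v, Fin.ext_iff]) (by simp [u, Fin.ext_iff])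
  have hcard : ({u, v}ᶜ : Finset (Fin n)).card = n - 2 := by
    rw [card_compl, card_pair (by simp [u, v, Fin.ext_iff]), Fintype.card_fin]
  refine IsLeast.csInf_eq ⟨⟨_, hS, hcard⟩, ?_⟩
  rintro k ⟨S, hS, rfl⟩
  exact hS.sub_two_le_card_of_pathGraph
end

section
/- The outer-connected domination number of the cycle C_n on n ≥ 4 vertices equals n−2, i.e., the minimum cardinality of an outer-connected dominating set of C_n is n−2. -/
/-!
Outside an ocd-set `S` of `C_n`, every vertex already spends one of its two edges on a neighbour
in `S`, so the graph induced on the complement has maximum degree at most one. Being connected,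
it therefore has at most two vertices, giving `|S| ≥ n - 2`; removing the two ends of an edge
attains the bound.
-/

open Finset

namespace SimpleGraph

variable {V : Type*} {G : SimpleGraph V}

lemma Reachable.adj_of_subsingleton_neighborSet (hG : ∀ v, (G.neighborSet v).Subsingleton)
    {u v : V} (h : G.Reachable u v) (huv : u ≠ v) : G.Adj u v := by
  obtain ⟨w⟩ := h
  induction w with
  | nil => exact absurd rfl huv
  | @cons u x v hux _ ih =>
    by_cases hxv : x = v
    · exact hxv ▸ hux
    · exact absurd (hG x hux.symm (ih hxv)) huv

lemma Connected.card_le_two [Fintype V] (hconn : G.Connected)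
    (hG : ∀ v, (G.neighborSet v).Subsingleton) : Fintype.card V ≤ 2 := by
  by_contra! h
  obtain ⟨a, b, c, hab, hac, hbc⟩ := Fintype.two_lt_card_iff.1 h
  exact hbc <| hG a ((hconn a b).adj_of_subsingleton_neighborSet hG hab)
    ((hconn a c).adj_of_subsingleton_neighborSet hG hac)

end SimpleGraph

section

open SimpleGraph

variable {V : Type*} {G : SimpleGraph V}

lemma IsDomSet.subsingleton_neighborSet_induce_compl [Fintype V] [DecidableRel G.Adj]
    (hdeg : ∀ v, G.degree v ≤ 2) {S : Finset V} (hS : IsDomSet G S)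
    (v : ↥(↑S : Set V)ᶜ) : ((G.induce (↑S : Set V)ᶜ).neighborSet v).Subsingleton := by
  intro x hx y hy
  by_contra hxy
  obtain ⟨u, huS, huv⟩ := hS v v.2
  have hxS : x.1 ∉ S := x.2
  have hyS : y.1 ∉ S := y.2
  have hthree : 2 < G.degree v := Finset.two_lt_card.2
    ⟨u, by simpa using huv.symm, x, by simpa using hx, y, by simpa using hy,
      fun h => hxS (h ▸ huS), fun h => hyS (h ▸ huS), fun h => hxy (Subtype.ext h)⟩
  exact (hdeg v).not_gt hthree

lemma IsOcdSet.card_sub_two_le [Fintype V] [DecidableRel G.Adj] (hdeg : ∀ v, G.degree v ≤ 2)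
    {S : Finset V} (hS : IsOcdSet G S) : Fintype.card V - 2 ≤ S.card := by
  classical
  obtain ⟨hdom, rfl | hconn⟩ := hS
  · simp
  · have := hconn.card_le_two (hdom.subsingleton_neighborSet_induce_compl hdeg)
    rw [Fintype.card_compl_set] at this
    simp only [Finset.coe_sort_coe, Fintype.card_coe] at this
    omega

lemma isOcdSet_univ_sdiff_pair [Fintype V] [DecidableEq V] {u v u' v' : V} (huv : G.Adj u v)
    (hu' : G.Adj u' u) (hu'v : u' ≠ v) (hv' : G.Adj v' v) (hv'u : v' ≠ u) :
    IsOcdSet G (univ \ {u, v}) := by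
  refine ⟨fun w hw => ?_, Or.inr ?_⟩
  · obtain rfl | rfl : w = u ∨ w = v := by simpa [or_iff_not_imp_left] using hw
    · exact ⟨u', by simp [hu'v, hu'.ne], hu'⟩
    · exact ⟨v', by simp [hv'u, hv'.ne], hv'⟩
  · have hcompl : ((↑(univ \ {u, v}) : Set V)ᶜ) = {u, v} := by ext; simp [or_iff_not_imp_left]
    rw [hcompl]
    exact induce_pair_connected_of_adj huv

end

open SimpleGraph Fin.CommRing in
lemma isOcdSet_cycleGraph_univ_sdiff_zero_one (m : ℕ) :
    IsOcdSet (cycleGraph (m + 3)) (univ \ {0, 1}) := by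
  refine isOcdSet_univ_sdiff_pair (u' := -1) (v' := 2)
    (cycleGraph_adj.2 (Or.inr (sub_zero 1))) (cycleGraph_adj.2 (Or.inr (by ring))) ?_
    (cycleGraph_adj.2 (Or.inl (by ring))) ?_
  · rw [Ne, neg_eq_iff_add_eq_zero, one_add_one_eq_two]
    simp [Fin.ext_iff, Nat.mod_eq_of_lt]
  · simp [Fin.ext_iff, Nat.mod_eq_of_lt]

/-- the outer-connected domination number of `C_n` (`n ≥ 4`) is `n - 2`. -/
theorem stmt_9 (n : ℕ) (hn : 4 ≤ n) :
    ocdNumber (SimpleGraph.cycleGraph n) = n - 2 := by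
  obtain ⟨m, rfl⟩ : ∃ m, n = m + 3 := ⟨n - 3, by omega⟩
  refine IsLeast.csInf_eq ⟨⟨_, isOcdSet_cycleGraph_univ_sdiff_zero_one m, ?_⟩, ?_⟩
  · rw [card_univ_sdiff, card_pair (by simp), Fintype.card_fin]
  · rintro k ⟨S, hS, rfl⟩
    simpa using hS.card_sub_two_le fun _ => SimpleGraph.cycleGraph_degree_three_le.le
end

section
/- For the complete bipartite graph K_{m,n} with parts of sizes m ≥ 2 and n ≥ 2, the ocd polynomial satisfies D_oc(K_{m,n}, x) = ((1+x)^m − 1 − x^m)·((1+x)^n − 1 − x^n) + (m+n)·x^{m+n−1} + x^{m+n}, where D_oc(G,x) = Σ_i d_oc(G,i) x^i. -/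
/-- The ocd polynomial of `G`: `D_oc(G,x) = Σ_i d_oc(G,i) xⁱ` (as a polynomial over `ℤ`). -/
noncomputable def ocdPoly {V : Type*} [Fintype V] (G : SimpleGraph V) : Polynomial ℤ :=
  ∑ i ∈ Finset.range (Fintype.card V + 1), Polynomial.C (docNum G i : ℤ) * Polynomial.X ^ i

/-!
Write `T = Sᶜ`. Both parts being nonempty, if `|T| ≤ 1` then `S` is an ocd-set of `K_{m,n}`.
If `|T| ≥ 2`, a connected `K_{m,n}[T]` must contain an edge, so `T` meets both parts; a vertex
of `T` is then dominated only if `S` meets the opposite part. Conversely, when `S` and `T` both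
meet both parts, `S` dominates and `K_{m,n}[T]` is connected. So the ocd-sets are the sets with
`|Sᶜ| ≤ 1`, contributing `x^{m+n} + (m+n) x^{m+n-1}`, and the sets meeting each part in a proper
nonempty subset, whose generating function is the product of the two factors
`(1 + x)^k - 1 - x^k`.
-/

open Finset SimpleGraph Polynomial

theorem ocdPoly_eq_sum {V : Type*} [Fintype V] (G : SimpleGraph V)
    [DecidablePred (IsOcdSet G)] :
    ocdPoly G = ∑ S : Finset V with IsOcdSet G S, (X : ℤ[X]) ^ #S := by
  rw [ocdPoly, ← sum_fiberwise_of_maps_to (g := card) (t := range (Fintype.card V + 1))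
    fun S _ => mem_range.2 (Nat.lt_succ_of_le (card_le_univ S))]
  refine sum_congr rfl fun i _ => ?_
  rw [sum_congr rfl fun S hS => by rw [(mem_filter.1 hS).2], sum_const, docNum,
    Nat.card_eq_fintype_card, Fintype.card_subtype, filter_filter, nsmul_eq_mul, C_eq_natCast]

section CompleteBipartite

variable {V W : Type*}

theorem completeBipartiteGraph_induce_connected {T : Set (V ⊕ W)} {a : V} {b : W}
    (ha : .inl a ∈ T) (hb : .inr b ∈ T) :
    ((completeBipartiteGraph V W).induce T).Connected := by
  have hreach : ∀ w : T, ((completeBipartiteGraph V W).induce T).Reachable w ⟨_, hb⟩ := by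
    rintro ⟨v | w, hw⟩
    · exact Adj.reachable (by simp)
    · exact (Adj.reachable (v := ⟨_, ha⟩) (by simp)).trans (Adj.reachable (by simp))
  exact (connected_iff _).2 ⟨fun u v => (hreach u).trans (hreach v).symm, ⟨⟨_, ha⟩⟩⟩

theorem exists_inl_inr_mem_of_induce_connected {T : Set (V ⊕ W)}
    (hT : ((completeBipartiteGraph V W).induce T).Connected) {u v : V ⊕ W} (hu : u ∈ T)
    (hv : v ∈ T) (huv : u ≠ v) : (∃ a, .inl a ∈ T) ∧ ∃ b, .inr b ∈ T := by
  have : Nontrivial T := ⟨⟨⟨u, hu⟩, ⟨v, hv⟩, by simpa using huv⟩⟩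
  obtain ⟨⟨w, hw⟩, hadj⟩ := hT.preconnected.exists_adj_of_nontrivial ⟨u, hu⟩
  rcases u with a | b <;> rcases w with a' | b' <;> simp at hadj
  exacts [⟨⟨a, hu⟩, b', hw⟩, ⟨⟨a', hw⟩, b, hu⟩]

theorem toRight_nonempty_of_isDomSet {S : Finset (V ⊕ W)}
    (hS : IsDomSet (completeBipartiteGraph V W) S) {a : V} (ha : .inl a ∉ S) :
    S.toRight.Nonempty := by
  obtain ⟨_ | b, hb, hadj⟩ := hS _ ha
  · simp at hadj
  · exact ⟨b, by simpa using hb⟩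

theorem toLeft_nonempty_of_isDomSet {S : Finset (V ⊕ W)}
    (hS : IsDomSet (completeBipartiteGraph V W) S) {b : W} (hb : .inr b ∉ S) :
    S.toLeft.Nonempty := by
  obtain ⟨a | _, ha, hadj⟩ := hS _ hb
  · exact ⟨a, by simpa using ha⟩
  · simp at hadj

variable [Fintype V] [Fintype W] [DecidableEq V] [DecidableEq W]

theorem isOcdSet_completeBipartiteGraph_of_card_compl_le_one [Nonempty V] [Nonempty W]
    {S : Finset (V ⊕ W)} (hS : #Sᶜ ≤ 1) : IsOcdSet (completeBipartiteGraph V W) S := by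
  set T : Set (V ⊕ W) := (↑S)ᶜ
  have hT : T.Subsingleton := fun x hx y hy =>
    card_le_one.1 hS x (by simpa [T] using hx) y (by simpa [T] using hy)
  refine ⟨fun v hv => ?_, ?_⟩
  · obtain ⟨u, hadj⟩ : ∃ u, (completeBipartiteGraph V W).Adj u v := by
      rcases v with a | b
      exacts [⟨.inr (Classical.arbitrary W), by simp⟩,
        ⟨.inl (Classical.arbitrary V), by simp⟩]
    refine ⟨u, by_contra fun hu => hadj.ne (hT hu hv), hadj⟩
  · rcases T.eq_empty_or_nonempty with h | ⟨v, hv⟩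
    · exact .inl (by simpa [T] using h)
    · have : Nonempty T := ⟨⟨v, hv⟩⟩
      have : Subsingleton T := hT.coe_sort
      exact .inr Connected.of_subsingleton

theorem isOcdSet_completeBipartiteGraph_iff [Nonempty V] [Nonempty W] (S : Finset (V ⊕ W)) :
    IsOcdSet (completeBipartiteGraph V W) S ↔
      #Sᶜ ≤ 1 ∨
        (S.toLeft.Nonempty ∧ S.toLeft ≠ univ) ∧ S.toRight.Nonempty ∧ S.toRight ≠ univ := by
  constructor
  · rintro ⟨hdom, hcon⟩
    refine or_iff_not_imp_left.2 fun hS => ?_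
    obtain ⟨u, hu, v, hv, huv⟩ := one_lt_card.1 (not_le.1 hS)
    obtain hU | hcon := hcon
    · simp [hU] at hu
    obtain ⟨⟨a, ha⟩, b, hb⟩ :=
      exists_inl_inr_mem_of_induce_connected hcon (by simpa using hu) (by simpa using hv) huv
    have ha' : a ∉ S.toLeft := by simpa using ha
    have hb' : b ∉ S.toRight := by simpa using hb
    exact ⟨⟨toLeft_nonempty_of_isDomSet hdom hb,
        (ne_of_mem_of_not_mem' (mem_univ a) ha').symm⟩,
      toRight_nonempty_of_isDomSet hdom ha, (ne_of_mem_of_not_mem' (mem_univ b) hb').symm⟩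
  · rintro (hS | ⟨⟨⟨a, ha⟩, hl⟩, ⟨b, hb⟩, hr⟩)
    · exact isOcdSet_completeBipartiteGraph_of_card_compl_le_one hS
    obtain ⟨a', -, ha'⟩ := exists_of_ssubset (ssubset_univ_iff.2 hl)
    obtain ⟨b', -, hb'⟩ := exists_of_ssubset (ssubset_univ_iff.2 hr)
    refine ⟨?_, .inr (completeBipartiteGraph_induce_connected (a := a') (b := b')
      (by simpa using ha') (by simpa using hb'))⟩
    rintro (_ | _) -
    exacts [⟨.inr b, by simpa using hb, by simp⟩, ⟨.inl a, by simpa using ha, by simp⟩]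

end CompleteBipartite

section Counting

variable {α β R : Type*} [Fintype α] [Fintype β]

theorem sum_pow_card_filter_toLeft_toRight [CommSemiring R] (p : Finset α → Prop)
    (q : Finset β → Prop) [DecidablePred p] [DecidablePred q] (x : R) :
    ∑ S : Finset (α ⊕ β) with p S.toLeft ∧ q S.toRight, x ^ #S =
      (∑ A with p A, x ^ #A) * ∑ B with q B, x ^ #B := by
  rw [sum_mul_sum, ← sum_product']
  refine sum_equiv sumEquiv.toEquiv (by simp) fun S _ => ?_
  simp [← card_toLeft_add_card_toRight (u := S), pow_add]

variable [DecidableEq α] [DecidableEq β]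

theorem one_lt_card_compl_of_toLeft_ne_univ_of_toRight_ne_univ {S : Finset (α ⊕ β)}
    (hl : S.toLeft ≠ univ) (hr : S.toRight ≠ univ) : 1 < #Sᶜ := by
  obtain ⟨a, -, ha⟩ := exists_of_ssubset (ssubset_univ_iff.2 hl)
  obtain ⟨b, -, hb⟩ := exists_of_ssubset (ssubset_univ_iff.2 hr)
  exact one_lt_card.2 ⟨.inl a, by simpa using ha, .inr b, by simpa using hb, Sum.inl_ne_inr⟩

theorem sum_pow_card_filter_nonempty_ne_univ [CommRing R] [Nonempty α] (x : R) :
    ∑ A : Finset α with A.Nonempty ∧ A ≠ univ, x ^ #A =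
      (1 + x) ^ Fintype.card α - 1 - x ^ Fintype.card α := by
  have hall : ∑ A : Finset α, x ^ #A = (1 + x) ^ Fintype.card α := by
    simpa [add_comm] using Fintype.sum_pow_mul_eq_add_pow α x 1
  have hfilter : ({A : Finset α | A.Nonempty ∧ A ≠ univ} : Finset _) = univ \ {∅, univ} := by
    ext A
    simp [nonempty_iff_ne_empty, not_or]
  rw [hfilter, sum_sdiff_eq_sub (subset_univ _), hall, sum_pair univ_nonempty.ne_empty.symm]
  simp only [card_empty, pow_zero, card_univ]
  ring

theorem sum_filter_card_compl_le_one [AddCommMonoid R] (f : ℕ → R) :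
    ∑ S : Finset α with #Sᶜ ≤ 1, f #S =
      f (Fintype.card α) + Fintype.card α • f (Fintype.card α - 1) := by
  have hfilter :
      ({S : Finset α | #Sᶜ ≤ 1} : Finset _) = insert univ (univ.image fun v => {v}ᶜ) := by
    ext S
    rw [mem_filter, Nat.le_one_iff_eq_zero_or_eq_one, card_eq_zero, card_eq_one,
      compl_eq_empty_iff]
    simp only [mem_insert, mem_image, mem_univ, true_and, compl_eq_comm]
  rw [hfilter, sum_insert (by simp),
    sum_image fun v _ w _ h => singleton_injective (compl_injective h)]
  simp [card_compl]

end Counting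

open Polynomial in
/-- the ocd polynomial of the complete bipartite graph `K_{m,n}` (`m, n ≥ 2`). -/
theorem stmt_10 (m n : ℕ) (hm : 2 ≤ m) (hn : 2 ≤ n) :
    ocdPoly (completeBipartiteGraph (Fin m) (Fin n)) =
      ((1 + X) ^ m - 1 - X ^ m) * ((1 + X) ^ n - 1 - X ^ n) +
        C ((m : ℤ) + n) * X ^ (m + n - 1) + X ^ (m + n) := by
  classical
  have : NeZero m := ⟨by omega⟩
  have : NeZero n := ⟨by omega⟩
  rw [ocdPoly_eq_sum, filter_congr fun S _ => isOcdSet_completeBipartiteGraph_iff S, filter_or,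
    sum_union, sum_filter_card_compl_le_one,
    sum_pow_card_filter_toLeft_toRight (fun A => A.Nonempty ∧ A ≠ univ)
      (fun B => B.Nonempty ∧ B ≠ univ),
    sum_pow_card_filter_nonempty_ne_univ, sum_pow_card_filter_nonempty_ne_univ]
  · simp only [Fintype.card_sum, Fintype.card_fin, nsmul_eq_mul, Nat.cast_add, C_add,
      C_eq_natCast]
    ring
  · exact disjoint_filter.2 fun S _ hS h =>
      (one_lt_card_compl_of_toLeft_ne_univ_of_toRight_ne_univ h.1.2 h.2.2).not_ge hS
end

section
/- Let G be the disjoint union of two finite simple graphs G_1 and G_2 on n_1 ≥ 1 and n_2 ≥ 1 vertices. A set S of vertices of G is an outer-connected dominating set of G if and only if either (S ∩ V(G_1)) is an ocd-set of G_1 and S ⊇ V(G_2), or (S ∩ V(G_2)) is an ocd-set of G_2 and S ⊇ V(G_1). -/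
/-! Unless `S` is everything, the complement of an ocd-set of `G₁ ⊕g G₂` induces a connected
graph, and no walk crosses between the summands, so `S` contains one summand entirely. The other
summand embeds as a union of components, and both domination and the induced graph on the
complement only see that union, so the ocd property transfers along the embedding. -/

namespace SimpleGraph

variable {V W : Type*} {G : SimpleGraph V} {K : SimpleGraph W}

noncomputable def Embedding.induceImageIso (f : G ↪g K) (s : Set V) :
    G.induce s ≃g K.induce (f '' s) where
  toEquiv := Equiv.Set.image f s f.injective
  map_rel_iff' := by simp [Equiv.Set.image, Equiv.Set.imageOfInjOn]

end SimpleGraph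

open SimpleGraph

section Embedding

/-! Throughout, `f` embeds `G` into `K` as a union of connected components of `K` (`hf`), and
`S` contains every vertex of `K` outside the image of `f` (`hS`). -/

variable {V W : Type*} {G : SimpleGraph V} {K : SimpleGraph W} (f : G ↪g K) {S : Finset W}

lemma isDomSet_iff_preimage_of_embedding (hf : ∀ v w, K.Adj w (f v) → w ∈ Set.range f)
    (hS : ∀ w ∉ Set.range f, w ∈ S) :
    IsDomSet K S ↔ IsDomSet G (S.preimage f f.injective.injOn) := by
  constructor
  · intro hdom v hv
    obtain ⟨w, hwS, hw⟩ := hdom (f v) (by simpa using hv)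
    obtain ⟨u, rfl⟩ := hf v w hw
    exact ⟨u, by simpa using hwS, f.map_adj_iff.1 hw⟩
  · intro hdom w hw
    obtain ⟨v, rfl⟩ : w ∈ Set.range f := by_contra fun h ↦ hw (hS w h)
    obtain ⟨u, huS, hu⟩ := hdom v (by simpa using hw)
    exact ⟨f u, by simpa using huS, f.map_adj_iff.2 hu⟩

lemma compl_eq_image_compl_preimage (hS : ∀ w ∉ Set.range f, w ∈ S) :
    (↑S : Set W)ᶜ = f '' (↑(S.preimage f f.injective.injOn) : Set V)ᶜ := by
  ext w
  constructor
  · intro hw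
    obtain ⟨v, rfl⟩ : w ∈ Set.range f := by_contra fun h ↦ hw (hS w h)
    exact ⟨v, by simpa using hw, rfl⟩
  · rintro ⟨v, hv, rfl⟩
    simpa using hv

variable [Fintype V] [Fintype W]

lemma eq_univ_iff_preimage_eq_univ (hS : ∀ w ∉ Set.range f, w ∈ S) :
    S = Finset.univ ↔ S.preimage f f.injective.injOn = Finset.univ := by
  simp only [← Finset.coe_eq_univ, ← Set.compl_empty_iff, compl_eq_image_compl_preimage f hS,
    Set.image_eq_empty]

lemma isOcdSet_iff_preimage_of_embedding (hf : ∀ v w, K.Adj w (f v) → w ∈ Set.range f)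
    (hS : ∀ w ∉ Set.range f, w ∈ S) :
    IsOcdSet K S ↔ IsOcdSet G (S.preimage f f.injective.injOn) := by
  rw [IsOcdSet, IsOcdSet, isDomSet_iff_preimage_of_embedding f hf hS,
    eq_univ_iff_preimage_eq_univ f hS, compl_eq_image_compl_preimage f hS,
    (f.induceImageIso _).connected_iff]

end Embedding

section Sum

variable {V₁ V₂ : Type*} [Fintype V₁] [Fintype V₂] {G₁ : SimpleGraph V₁} {G₂ : SimpleGraph V₂}
  {S : Finset (V₁ ⊕ V₂)}

lemma isOcdSet_sum_iff_left (hS : ∀ w : V₂, Sum.inr w ∈ S) :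
    IsOcdSet (G₁ ⊕g G₂) S ↔ IsOcdSet G₁ (S.preimage Sum.inl Sum.inl_injective.injOn) := by
  refine isOcdSet_iff_preimage_of_embedding Embedding.sumInl ?_ ?_
  · rintro v (u | u) h
    · exact ⟨u, rfl⟩
    · simp at h
  · rintro (v | w) h
    · exact absurd ⟨v, rfl⟩ h
    · exact hS w

lemma isOcdSet_sum_iff_right (hS : ∀ v : V₁, Sum.inl v ∈ S) :
    IsOcdSet (G₁ ⊕g G₂) S ↔ IsOcdSet G₂ (S.preimage Sum.inr Sum.inr_injective.injOn) := by
  refine isOcdSet_iff_preimage_of_embedding Embedding.sumInr ?_ ?_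
  · rintro w (u | u) h
    · simp at h
    · exact ⟨u, rfl⟩
  · rintro (v | w) h
    · exact hS v
    · exact absurd ⟨w, rfl⟩ h

lemma IsOcdSet.forall_inr_mem_or_forall_inl_mem (h : IsOcdSet (G₁ ⊕g G₂) S) :
    (∀ w : V₂, Sum.inr w ∈ S) ∨ ∀ v : V₁, Sum.inl v ∈ S := by
  rcases h.2 with rfl | hconn
  · simp
  by_contra! ⟨⟨w, hw⟩, ⟨v, hv⟩⟩
  have hreach := (hconn.preconnected ⟨Sum.inl v, hv⟩ ⟨Sum.inr w, hw⟩).map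
    (Embedding.induce _).toHom
  exact not_reachable_sum_inl_inr v w hreach

end Sum

theorem stmt_12_general {V₁ V₂ : Type*} [Fintype V₁] [Fintype V₂]
    (G₁ : SimpleGraph V₁) (G₂ : SimpleGraph V₂)
    (S : Finset (V₁ ⊕ V₂)) :
    IsOcdSet (G₁ ⊕g G₂) S ↔
      (IsOcdSet G₁ (S.preimage Sum.inl Sum.inl_injective.injOn) ∧ ∀ w : V₂, Sum.inr w ∈ S) ∨
      (IsOcdSet G₂ (S.preimage Sum.inr Sum.inr_injective.injOn) ∧ ∀ v : V₁, Sum.inl v ∈ S) := by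
  constructor
  · intro h
    rcases h.forall_inr_mem_or_forall_inl_mem with hS | hS
    · exact .inl ⟨(isOcdSet_sum_iff_left hS).1 h, hS⟩
    · exact .inr ⟨(isOcdSet_sum_iff_right hS).1 h, hS⟩
  · rintro (⟨h, hS⟩ | ⟨h, hS⟩)
    · exact (isOcdSet_sum_iff_left hS).2 h
    · exact (isOcdSet_sum_iff_right hS).2 h

/-- `S` is an ocd-set of the disjoint union `G₁ ∪ G₂` iff
`S ∩ V(G₁)` is an ocd-set of `G₁` and `S ⊇ V(G₂)`, or symmetrically. -/
theorem stmt_12 {V₁ V₂ : Type*} [Fintype V₁] [Fintype V₂]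
    (G₁ : SimpleGraph V₁) (G₂ : SimpleGraph V₂)
    (h₁ : 1 ≤ Fintype.card V₁) (h₂ : 1 ≤ Fintype.card V₂)
    (S : Finset (V₁ ⊕ V₂)) :
    IsOcdSet (G₁ ⊕g G₂) S ↔
      (IsOcdSet G₁ (S.preimage Sum.inl Sum.inl_injective.injOn) ∧ ∀ w : V₂, Sum.inr w ∈ S) ∨
      (IsOcdSet G₂ (S.preimage Sum.inr Sum.inr_injective.injOn) ∧ ∀ v : V₁, Sum.inl v ∈ S) :=
  stmt_12_general G₁ G₂ S
end
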